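/- arXiv:2510.15200 — 5 statements merged into one kernel-verified Lean document; each statement's English description precedes it below -/
import Mathlib

section
/- Let θ > 0, c > 0, 0 ≤ w_L ≤ w_H ≤ θ/2, η̄ ≥ 0, and suppose 0 ≤ k(θ−w_H) < 2c with η̄_H = k(θ−w_H)/(2c − k(θ−w_H)). Then the Defend profit π_{S₁}(k) = [2c(2+η̄_H+η̄) + (1+η̄_H)(1+η̄)k(θ−w_H)](θ−w_H)w_H/(4c²) is strictly increasing in k on [0, 2c/(θ−w_H)) whenever w_H > 0. -/
/-! With `x = k(θ − w_H)` one has `1 + η̄_H = 2c/(2c − x)`, so the bracket collapses to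
`4c²(2 + η̄)/(2c − x)` and `π_{S₁}(k) = (2 + η̄)(θ − w_H) w_H / (2c − k(θ − w_H))`: a positive
constant over a denominator that decreases in `k` while staying positive on the range. -/

theorem defend_profit_eq_div (c η k d w : ℝ) (hc : c ≠ 0) (hk : 2 * c - k * d ≠ 0) :
    (2 * c * (2 + k * d / (2 * c - k * d) + η) +
        (1 + k * d / (2 * c - k * d)) * (1 + η) * k * d) * d * w / (4 * c ^ 2) =
      (2 + η) * d * w / (2 * c - k * d) := by
  field_simp
  ring

theorem defend_profit_increasing_general (θ c wH ηbar : ℝ)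
    (hH : wH ≤ θ / 2) (hηbar : 0 ≤ ηbar) (hwH : 0 < wH) :
    let ηH : ℝ → ℝ := fun k => k * (θ - wH) / (2 * c - k * (θ - wH))
    let πS₁ : ℝ → ℝ := fun k =>
      (2 * c * (2 + ηH k + ηbar) + (1 + ηH k) * (1 + ηbar) * k * (θ - wH)) *
        (θ - wH) * wH / (4 * c ^ 2)
    ∀ k k' : ℝ, 0 ≤ k → k < k' → k' < 2 * c / (θ - wH) →
      πS₁ k < πS₁ k' := by
  intro ηH πS₁ k k' hk hkk' hk'
  have hd : 0 < θ - wH := by linarith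
  have hk'_lt : k' * (θ - wH) < 2 * c := (lt_div_iff₀ hd).mp hk'
  have hk_lt : k * (θ - wH) < k' * (θ - wH) := mul_lt_mul_of_pos_right hkk' hd
  have hc : 0 < c := by nlinarith [mul_nonneg hk hd.le]
  simp only [πS₁, ηH]
  rw [defend_profit_eq_div c ηbar k _ wH hc.ne' (by linarith),
    defend_profit_eq_div c ηbar k' _ wH hc.ne' (by linarith)]
  exact div_lt_div_of_pos_left (by positivity) (by linarith) (by linarith)

/-- The Defend profit `π_{S₁}(k)` is strictly increasing in `k` on
`[0, 2c/(θ−w_H))` whenever `w_H > 0`. -/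
theorem defend_profit_increasing (θ c wL wH ηbar : ℝ)
    (hθ : 0 < θ) (hc : 0 < c) (hwL : 0 ≤ wL) (hLH : wL ≤ wH)
    (hH : wH ≤ θ / 2) (hηbar : 0 ≤ ηbar) (hwH : 0 < wH) :
    let ηH : ℝ → ℝ := fun k => k * (θ - wH) / (2 * c - k * (θ - wH))
    let πS₁ : ℝ → ℝ := fun k =>
      (2 * c * (2 + ηH k + ηbar) + (1 + ηH k) * (1 + ηbar) * k * (θ - wH)) *
        (θ - wH) * wH / (4 * c ^ 2)
    ∀ k k' : ℝ, 0 ≤ k → k < k' → k' < 2 * c / (θ - wH) →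
      πS₁ k < πS₁ k' :=
  defend_profit_increasing_general θ c wH ηbar hH hηbar hwH
end

section
/- Let θ > 0, c > 0, 0 < w_L ≤ w_H ≤ θ/2, η̄ ≥ 0, 0 ≤ k(θ−w_L) < 2c, and η̄_L = k(θ−w_L)/(2c−k(θ−w_L)). Then the Dominate profit π_{S₂} = [2c(2+η̄_L+η̄)+(1+η̄_L)(1+η̄)k(θ−w_L)](θ−w_L)w_L/(4c²) is at least the Harvest profit π_{S₀} = (1+η̄)(θ−w_H)w_H/(2c) if and only if k ≥ 2c·(1/(θ−w_L) − (2+η̄)w_L/((1+η̄)(θ−w_H)w_H)). -/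
/-!
Writing `D = 2c − k(θ − w_L)`, the openness `η̄_L = k(θ − w_L)/D` satisfies `1 + η̄_L = 2c/D`, and the
Dominate profit collapses to `π_{S₂} = (2 + η̄)(θ − w_L)w_L / D`. Since `D > 0`, comparing it with
`π_{S₀} = A/(2c)`, `A = (1 + η̄)(θ − w_H)w_H > 0`, is the linear inequality `A·D ≤ 2c(2 + η̄)(θ − w_L)w_L`
in `k`, which solves to the stated threshold.
-/

lemma dominate_profit_eq {c k t w e : ℝ} (hc : c ≠ 0) (hD : 2 * c - k * t ≠ 0) :
    (2 * c * (2 + k * t / (2 * c - k * t) + e) + (1 + k * t / (2 * c - k * t)) * (1 + e) * k * t) *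
        t * w / (4 * c ^ 2) = (2 + e) * w * t / (2 * c - k * t) := by
  field_simp
  ring

lemma div_two_mul_le_div_sub_iff {A b c k t : ℝ} (hA : 0 < A) (hc : 0 < c) (ht : 0 < t)
    (hD : 0 < 2 * c - k * t) :
    A / (2 * c) ≤ b * t / (2 * c - k * t) ↔ 2 * c * (1 / t - b / A) ≤ k := by
  have hthreshold : 2 * c * (1 / t - b / A) = 2 * c * (A - b * t) / (A * t) := by
    field_simp
  rw [div_le_div_iff₀ (by positivity) hD, hthreshold, div_le_iff₀ (by positivity)]
  constructor <;> intro h <;> linarith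

theorem dominate_vs_harvest_general (θ c wL wH ηbar k : ℝ)
    (hc : 0 < c) (hwL : 0 < wL) (hLH : wL ≤ wH)
    (hH : wH ≤ θ / 2) (hηbar : 0 ≤ ηbar)
    (hk2c : k * (θ - wL) < 2 * c) :
    let ηL : ℝ := k * (θ - wL) / (2 * c - k * (θ - wL))
    let πS₂ : ℝ :=
      (2 * c * (2 + ηL + ηbar) + (1 + ηL) * (1 + ηbar) * k * (θ - wL)) *
        (θ - wL) * wL / (4 * c ^ 2)
    let πS₀ : ℝ := (1 + ηbar) * (θ - wH) * wH / (2 * c)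
    (πS₀ ≤ πS₂ ↔
      2 * c * (1 / (θ - wL) - (2 + ηbar) * wL / ((1 + ηbar) * (θ - wH) * wH)) ≤ k) := by
  intro ηL πS₂ πS₀
  have hwH : 0 < wH := hwL.trans_le hLH
  have hθwH : 0 < θ - wH := by linarith
  have hθwL : 0 < θ - wL := by linarith
  have hD : 0 < 2 * c - k * (θ - wL) := sub_pos.mpr hk2c
  have hA : 0 < (1 + ηbar) * (θ - wH) * wH := by positivity
  rw [show πS₂ = (2 + ηbar) * wL * (θ - wL) / (2 * c - k * (θ - wL)) from
    dominate_profit_eq hc.ne' hD.ne']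
  exact div_two_mul_le_div_sub_iff hA hc hθwL hD

/-- Dominate profit `π_{S₂}` is at least Harvest profit `π_{S₀}` iff
`k ≥ 2c(1/(θ−w_L) − (2+η̄)w_L/((1+η̄)(θ−w_H)w_H))`. -/
theorem dominate_vs_harvest (θ c wL wH ηbar k : ℝ)
    (hθ : 0 < θ) (hc : 0 < c) (hwL : 0 < wL) (hLH : wL ≤ wH)
    (hH : wH ≤ θ / 2) (hηbar : 0 ≤ ηbar)
    (hk0 : 0 ≤ k * (θ - wL)) (hk2c : k * (θ - wL) < 2 * c) :
    let ηL : ℝ := k * (θ - wL) / (2 * c - k * (θ - wL))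
    let πS₂ : ℝ :=
      (2 * c * (2 + ηL + ηbar) + (1 + ηL) * (1 + ηbar) * k * (θ - wL)) *
        (θ - wL) * wL / (4 * c ^ 2)
    let πS₀ : ℝ := (1 + ηbar) * (θ - wH) * wH / (2 * c)
    (πS₀ ≤ πS₂ ↔
      2 * c * (1 / (θ - wL) - (2 + ηbar) * wL / ((1 + ηbar) * (θ - wH) * wH)) ≤ k) :=
  dominate_vs_harvest_general θ c wL wH ηbar k hc hwL hLH hH hηbar hk2c
end

section
/- Let θ > 0 and 0 < w_L < w_H ≤ θ/2 with θ > w_H + w_L. Define k̄₁₂ = 2c(θ−w_L−w_H)/((θ−w_L)(θ−w_H+w_L+η̄w_L)), k̄₁₃ = 2c[η̄(θ−w_H)w_H−(1+η̄)θw_L+(1+η̄)w_L²]/((1+η̄)(θ−w_H)²w_H), and k̄₂₃ = 2c(1/(θ−w_L) − (2+η̄)w_L/((1+η̄)(θ−w_H)w_H)), and set η' = ((θ−w_H)² + w_L(w_H−w_L))/((θ−w_H−w_L)(w_H−w_L)). Then k̄₁₃ ≤ k̄₂₃ ≤ k̄₁₂ when η̄ ≤ η', and k̄₁₂ ≤ k̄₂₃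 ≤ k̄₁₃ when η̄ ≥ η'. -/
/-! The three thresholds differ by multiples of one quantity: both `k̄₂₃ - k̄₁₃` and `k̄₁₂ - k̄₂₃`
are positive multiples of `(θ - w_H)² + w_L (w_H - w_L) - η̄ (θ - w_H - w_L)(w_H - w_L)`,
which is affine and decreasing in `η̄` and vanishes exactly at `η̄ = η'`. -/

noncomputable section

namespace Flywheel

variable (θ c wL wH η : ℝ)

def threshold₁₂ : ℝ := 2 * c * (θ - wL - wH) / ((θ - wL) * (θ - wH + wL + η * wL))

def threshold₁₃ : ℝ :=
  2 * c * (η * (θ - wH) * wH - (1 + η) * θ * wL + (1 + η) * wL ^ 2) /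
    ((1 + η) * (θ - wH) ^ 2 * wH)

def threshold₂₃ : ℝ := 2 * c * (1 / (θ - wL) - (2 + η) * wL / ((1 + η) * (θ - wH) * wH))

def thresholdMargin : ℝ := (θ - wH) ^ 2 + wL * (wH - wL) - η * ((θ - wH - wL) * (wH - wL))

variable {θ c wL wH η}

theorem threshold₂₃_sub_threshold₁₃ (hL : θ - wL ≠ 0) (hH : θ - wH ≠ 0) (hwH : wH ≠ 0)
    (hη : 1 + η ≠ 0) :
    threshold₂₃ θ c wL wH η - threshold₁₃ θ c wL wH η =
      thresholdMargin θ wL wH η *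
        (2 * c * (wH - wL) / ((1 + η) * (θ - wH) ^ 2 * wH * (θ - wL))) := by
  unfold threshold₂₃ threshold₁₃ thresholdMargin
  field_simp
  ring

theorem threshold₁₂_sub_threshold₂₃ (hL : θ - wL ≠ 0) (hH : θ - wH ≠ 0) (hwH : wH ≠ 0)
    (hη : 1 + η ≠ 0) (h₁₂ : θ - wH + wL + η * wL ≠ 0) :
    threshold₁₂ θ c wL wH η - threshold₂₃ θ c wL wH η =
      thresholdMargin θ wL wH η *
        (2 * c * wL * (2 + η) /
          ((1 + η) * (θ - wH) * wH * (θ - wL) * (θ - wH + wL + η * wL))) := by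
  unfold threshold₁₂ threshold₂₃ thresholdMargin
  -- `field_simp` normalises `η * wL` to `wL * η` and would no longer find `h₁₂`
  rw [mul_comm η wL] at h₁₂ ⊢
  field_simp
  ring

end Flywheel

end

theorem le_chain_of_sub_eq_mul {x y z a p q : ℝ} (hp : 0 ≤ p) (hq : 0 ≤ q)
    (hxy : y - x = a * p) (hyz : z - y = a * q) :
    (0 ≤ a → x ≤ y ∧ y ≤ z) ∧ (a ≤ 0 → z ≤ y ∧ y ≤ x) := by
  refine ⟨fun ha => ⟨?_, ?_⟩, fun ha => ⟨?_, ?_⟩⟩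
  · linarith [mul_nonneg ha hp]
  · linarith [mul_nonneg ha hq]
  · linarith [mul_nonpos_of_nonpos_of_nonneg ha hq]
  · linarith [mul_nonpos_of_nonpos_of_nonneg ha hp]

open Flywheel in
theorem threshold_ordering_general (θ c wL wH ηbar : ℝ)
    (hc : 0 < c) (hηbar : 0 ≤ ηbar)
    (hwL : 0 < wL) (hLH : wL < wH) (hsum : wH + wL < θ) :
    let k₁₂ : ℝ := 2 * c * (θ - wL - wH) / ((θ - wL) * (θ - wH + wL + ηbar * wL))
    let k₁₃ : ℝ :=
      2 * c * (ηbar * (θ - wH) * wH - (1 + ηbar) * θ * wL + (1 + ηbar) * wL ^ 2) /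
        ((1 + ηbar) * (θ - wH) ^ 2 * wH)
    let k₂₃ : ℝ :=
      2 * c * (1 / (θ - wL) - (2 + ηbar) * wL / ((1 + ηbar) * (θ - wH) * wH))
    let η' : ℝ := ((θ - wH) ^ 2 + wL * (wH - wL)) / ((θ - wH - wL) * (wH - wL))
    (ηbar ≤ η' → k₁₃ ≤ k₂₃ ∧ k₂₃ ≤ k₁₂) ∧
    (η' ≤ ηbar → k₁₂ ≤ k₂₃ ∧ k₂₃ ≤ k₁₃) := by
  intro k₁₂ k₁₃ k₂₃ η'
  have hwH : 0 < wH := hwL.trans hLH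
  have hL : 0 < θ - wL := by linarith
  have hH : 0 < θ - wH := by linarith
  have hgap : 0 < wH - wL := by linarith
  have hη : 0 < 1 + ηbar := by linarith
  have h₁₂ : 0 < θ - wH + wL + ηbar * wL := by positivity
  have hden : 0 < (θ - wH - wL) * (wH - wL) := mul_pos (by linarith) hgap
  have chain := le_chain_of_sub_eq_mul (by positivity) (by positivity)
    (threshold₂₃_sub_threshold₁₃ (c := c) hL.ne' hH.ne' hwH.ne' hη.ne')
    (threshold₁₂_sub_threshold₂₃ (c := c) hL.ne' hH.ne' hwH.ne' hη.ne' h₁₂.ne')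
  refine ⟨fun h => chain.1 ?_, fun h => chain.2 ?_⟩
  · rwa [thresholdMargin, sub_nonneg, ← le_div_iff₀ hden]
  · rwa [thresholdMargin, sub_nonpos, ← div_le_iff₀ hden]

/-- Ordering of the three indifference thresholds `k̄₁₂, k̄₁₃, k̄₂₃` around
`η' = ((θ−w_H)² + w_L(w_H−w_L))/((θ−w_H−w_L)(w_H−w_L))`. -/
theorem threshold_ordering (θ c wL wH ηbar : ℝ)
    (hθ : 0 < θ) (hc : 0 < c) (hηbar : 0 ≤ ηbar)
    (hwL : 0 < wL) (hLH : wL < wH) (hH : wH ≤ θ / 2) (hsum : wH + wL < θ) :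
    let k₁₂ : ℝ := 2 * c * (θ - wL - wH) / ((θ - wL) * (θ - wH + wL + ηbar * wL))
    let k₁₃ : ℝ :=
      2 * c * (ηbar * (θ - wH) * wH - (1 + ηbar) * θ * wL + (1 + ηbar) * wL ^ 2) /
        ((1 + ηbar) * (θ - wH) ^ 2 * wH)
    let k₂₃ : ℝ :=
      2 * c * (1 / (θ - wL) - (2 + ηbar) * wL / ((1 + ηbar) * (θ - wH) * wH))
    let η' : ℝ := ((θ - wH) ^ 2 + wL * (wH - wL)) / ((θ - wH - wL) * (wH - wL))
    (ηbar ≤ η' → k₁₃ ≤ k₂₃ ∧ k₂₃ ≤ k₁₂) ∧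
    (η' ≤ ηbar → k₁₂ ≤ k₂₃ ∧ k₂₃ ≤ k₁₃) :=
  threshold_ordering_general θ c wL wH ηbar hc hηbar hwL hLH hsum
end

section
/- Under vertical integration with openness η̄ ≥ 0, cost scalar c > 0, conversion rate θ > 0 and flywheel strength k ≥ 0: the integrated firm's first-period optimal effort is Q₁ᵥ = (1+η̄)θ/(2c), and its second-period optimal effort is Q₂ᵥ = (1+η̄)[2c + kθ(1+η̄)]θ/(4c²); both are obtained by maximizing θQ − cQ²/(1+η̄) in period 1 and θQ − cQ²/((1+kQ₁ᵥ)(1+η̄)) in period 2. -/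
/-! A profit `θ Q - c Q² / D` with `c, D > 0` is a concave quadratic in `Q`, maximized at its
vertex `Q = θ D / (2 c)`. In period 1 the cost divisor is `D = 1 + η̄`; in period 2 it is
`D = (1 + k Q₁ᵥ)(1 + η̄)`, which is positive because `Q₁ᵥ > 0`, and substituting `Q₁ᵥ` into the
vertex gives the stated `Q₂ᵥ`. -/

theorem sub_mul_sq_div_le_at_vertex {b c d : ℝ} (hc : 0 < c) (hd : 0 < d) (Q : ℝ) :
    b * Q - c * Q ^ 2 / d ≤ b * (b * d / (2 * c)) - c * (b * d / (2 * c)) ^ 2 / d := by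
  have gap : b * (b * d / (2 * c)) - c * (b * d / (2 * c)) ^ 2 / d - (b * Q - c * Q ^ 2 / d)
      = c / d * (Q - b * d / (2 * c)) ^ 2 := by
    field_simp
    ring
  have : 0 ≤ c / d * (Q - b * d / (2 * c)) ^ 2 := by positivity
  linarith

/-- Under vertical integration, the optimal efforts are
`Q₁ᵥ = (1+η̄)θ/(2c)` and `Q₂ᵥ = (1+η̄)[2c + kθ(1+η̄)]θ/(4c²)`, maximizing the
respective per-period profits. -/
theorem vertical_integration_efforts (θ c ηbar k : ℝ)
    (hθ : 0 < θ) (hc : 0 < c) (hηbar : 0 ≤ ηbar) (hk : 0 ≤ k) :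
    let Q₁v : ℝ := (1 + ηbar) * θ / (2 * c)
    let Q₂v : ℝ := (1 + ηbar) * (2 * c + k * θ * (1 + ηbar)) * θ / (4 * c ^ 2)
    let π₁ : ℝ → ℝ := fun Q => θ * Q - c * Q ^ 2 / (1 + ηbar)
    let π₂ : ℝ → ℝ := fun Q => θ * Q - c * Q ^ 2 / ((1 + k * Q₁v) * (1 + ηbar))
    (∀ Q : ℝ, π₁ Q ≤ π₁ Q₁v) ∧ (∀ Q : ℝ, π₂ Q ≤ π₂ Q₂v) := by
  intro Q₁v Q₂v π₁ π₂
  have hη : 0 < 1 + ηbar := by linarith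
  have hQ₁v : Q₁v = θ * (1 + ηbar) / (2 * c) := by simp only [Q₁v]; ring
  have hflywheel : 0 < (1 + k * Q₁v) * (1 + ηbar) := by rw [hQ₁v]; positivity
  have hQ₂v : Q₂v = θ * ((1 + k * Q₁v) * (1 + ηbar)) / (2 * c) := by
    simp only [Q₂v, hQ₁v]
    field_simp
    ring
  refine ⟨fun Q => ?_, fun Q => ?_⟩
  · rw [hQ₁v]
    exact sub_mul_sq_div_le_at_vertex hc hη Q
  · rw [hQ₂v]
    exact sub_mul_sq_div_le_at_vertex hc hflywheel Q
end

section
/- Fix θ > 0, c > 0, 0 ≤ w_L ≤ w_H ≤ θ/2, η̄ ≥ 0. When k = 0, the integrated firm's second-period effort Q₂ᵥ = (1+η̄)θ/(2c) is strictly less than the decentralized Harvest-regime second-period effort Q₂ = (1+η̄)²(θ−w_L)/(2c) whenever η̄·(θ−w_L) > w_L; i.e., foreclosing the entrant reduces second-period fine-tuning when the flywheel is absent and the entrant's learning advantage (1+η̄) is sufficiently large. -/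
theorem one_add_sq_mul_sub_sub_one_add_mul {R : Type*} [CommRing R] (η θ w : R) :
    (1 + η) ^ 2 * (θ - w) - (1 + η) * θ = (1 + η) * (η * (θ - w) - w) := by
  ring

theorem foreclosure_reduces_effort_general (θ c wL ηbar : ℝ)
    (hc : 0 < c) (hηbar : 0 ≤ ηbar)
    (hcond : wL < ηbar * (θ - wL)) :
    (1 + ηbar) * θ / (2 * c) < (1 + ηbar) ^ 2 * (θ - wL) / (2 * c) := by
  have hgap : 0 < (1 + ηbar) ^ 2 * (θ - wL) - (1 + ηbar) * θ := by
    rw [one_add_sq_mul_sub_sub_one_add_mul]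
    exact mul_pos (by linarith) (sub_pos.mpr hcond)
  exact div_lt_div_of_pos_right (sub_pos.mp hgap) (by positivity)

/-- With `k = 0`, integration's second-period effort `(1+η̄)θ/(2c)` is strictly
below the decentralized Harvest-regime effort `(1+η̄)²(θ−w_L)/(2c)` whenever
`η̄(θ−w_L) > w_L`. -/
theorem foreclosure_reduces_effort (θ c wL wH ηbar : ℝ)
    (hθ : 0 < θ) (hc : 0 < c) (hwL : 0 ≤ wL) (hLH : wL ≤ wH)
    (hH : wH ≤ θ / 2) (hηbar : 0 ≤ ηbar)
    (hcond : wL < ηbar * (θ - wL)) :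
    (1 + ηbar) * θ / (2 * c) < (1 + ηbar) ^ 2 * (θ - wL) / (2 * c) :=
  foreclosure_reduces_effort_general θ c wL ηbar hc hηbar hcond
end
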